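/- Let a, b > 0 and let z = x + yi with x = (a² - b² + 1)/2 and y > 0, y² = (b² - (a-1)²)((a+1)² - b²)/4 (so |z| = a, |z-1| = b). Then the argument θ of w = -ρ(z-ρ)/(z-ρ⁻¹) satisfies tan θ = √3·(b² - 1)/(2a² - b² - 1), provided 2a² - b² - 1 ≠ 0, where ρ = exp(πi/3). Equivalently, Im(w)/Re(w) = √3(x² + y² - 2x)/(x² + y² + 2x - 2). -/

import Mathlib

/-!
Since `ρ⁻¹ = conj ρ` and `ρ² = ρ - 1`, multiplying numerator and denominator of `w` by
`conj (z - ρ⁻¹)` gives `w * |z - ρ⁻¹|² = 1 - 2x + (2x - |z|²) ρ`, a real combination of `1` and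
`ρ = 1/2 + (√3/2) i`; its imaginary-to-real ratio is `√3 (|z|² - 2x) / (|z|² + 2x - 2)`.
Substituting `|z|² = a²` and the value of `x` gives the form in `a` and `b`.
-/

open Complex Real

noncomputable def ρ : ℂ := Complex.exp (Real.pi * Complex.I / 3)

open ComplexConjugate

lemma ρ_re : ρ.re = 1 / 2 := by
  simp [ρ, Complex.exp_re]

lemma ρ_im : ρ.im = √3 / 2 := by
  simp [ρ, Complex.exp_im]

lemma normSq_ρ : normSq ρ = 1 := by
  rw [normSq_apply, ρ_re, ρ_im]
  nlinarith [Real.sq_sqrt (show (0 : ℝ) ≤ 3 by norm_num)]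

lemma ρ_inv : ρ⁻¹ = conj ρ := by
  rw [inv_def, normSq_ρ, inv_one, ofReal_one, mul_one]

lemma ρ_sq_sub_ρ_add_one : ρ ^ 2 - ρ + 1 = 0 := by
  have h : ρ + conj ρ = 1 := by rw [add_conj, ρ_re]; norm_num
  have h' : ρ * conj ρ = 1 := by rw [mul_conj, normSq_ρ, ofReal_one]
  linear_combination ρ * h - h'

lemma neg_ρ_mul_sub_mul_conj (z : ℂ) :
    -ρ * (z - ρ) * conj (z - ρ⁻¹) = 1 - 2 * z.re + (2 * z.re - normSq z) * ρ := by
  have h_add : z + conj z = 2 * z.re := by rw [add_conj, ofReal_mul, ofReal_ofNat]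
  rw [ρ_inv, map_sub, conj_conj]
  linear_combination (-ρ) * mul_conj z + ρ ^ 2 * h_add
    + (2 * (z.re : ℂ) - ρ - 1) * ρ_sq_sub_ρ_add_one

lemma im_div_re_neg_ρ_mul_sub_div (z : ℂ) (hz : z ≠ ρ⁻¹) :
    (-ρ * (z - ρ) / (z - ρ⁻¹)).im / (-ρ * (z - ρ) / (z - ρ⁻¹)).re
      = √3 * (normSq z - 2 * z.re) / (normSq z + 2 * z.re - 2) := by
  have hN : normSq (z - ρ⁻¹) ≠ 0 := normSq_eq_zero.not.mpr (sub_ne_zero.mpr hz)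
  have h_div : -ρ * (z - ρ) / (z - ρ⁻¹)
      = -ρ * (z - ρ) * conj (z - ρ⁻¹) * ((normSq (z - ρ⁻¹))⁻¹ : ℝ) := by
    rw [div_eq_mul_inv, inv_def (z - ρ⁻¹), ← mul_assoc]
  rw [h_div, neg_ρ_mul_sub_mul_conj, im_mul_ofReal,
    re_mul_ofReal, mul_div_mul_right _ _ (inv_ne_zero hN)]
  simp only [add_re, sub_re, add_im, sub_im, one_re, one_im,
    mul_re, mul_im, ofReal_re, ofReal_im, ρ_re, ρ_im, re_ofNat, im_ofNat]
  rw [← mul_div_mul_left _ _ (by norm_num : (-2 : ℝ) ≠ 0)]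
  congr 1 <;> ring

theorem stmt14_general (a b x y : ℝ)
    (hx : x = (a ^ 2 - b ^ 2 + 1) / 2) (hy : 0 < y)
    (hy2 : y ^ 2 = (b ^ 2 - (a - 1) ^ 2) * ((a + 1) ^ 2 - b ^ 2) / 4)
    (z w : ℂ) (hz : z = (x : ℂ) + (y : ℂ) * Complex.I)
    (hw : w = -ρ * (z - ρ) / (z - ρ⁻¹)) :
    w.im / w.re = Real.sqrt 3 * (b ^ 2 - 1) / (2 * a ^ 2 - b ^ 2 - 1) ∧
    w.im / w.re = Real.sqrt 3 * (x ^ 2 + y ^ 2 - 2 * x) / (x ^ 2 + y ^ 2 + 2 * x - 2) := by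
  have hre : z.re = x := by simp [hz]
  have hnormSq : normSq z = x ^ 2 + y ^ 2 := by rw [hz, normSq_add_mul_I]
  have hz_ne : z ≠ ρ⁻¹ := by
    intro h
    have him := congrArg Complex.im h
    rw [ρ_inv, conj_im, ρ_im, hz] at him
    simp only [add_im, ofReal_im, mul_im, ofReal_re, I_im, I_re] at him
    nlinarith [Real.sqrt_nonneg 3]
  have hw_ratio : w.im / w.re = √3 * (x ^ 2 + y ^ 2 - 2 * x) / (x ^ 2 + y ^ 2 + 2 * x - 2) := by
    rw [hw, im_div_re_neg_ρ_mul_sub_div z hz_ne, hnormSq, hre]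
  have hnorm_a : x ^ 2 + y ^ 2 = a ^ 2 := by rw [hx, hy2]; ring
  refine ⟨?_, hw_ratio⟩
  rw [hw_ratio, hnorm_a, hx]
  congr 1 <;> ring

theorem stmt14 (a b x y : ℝ) (ha : 0 < a) (hb : 0 < b)
    (hx : x = (a ^ 2 - b ^ 2 + 1) / 2) (hy : 0 < y)
    (hy2 : y ^ 2 = (b ^ 2 - (a - 1) ^ 2) * ((a + 1) ^ 2 - b ^ 2) / 4)
    (hden : 2 * a ^ 2 - b ^ 2 - 1 ≠ 0)
    (z w : ℂ) (hz : z = (x : ℂ) + (y : ℂ) * Complex.I)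
    (hw : w = -ρ * (z - ρ) / (z - ρ⁻¹)) :
    w.im / w.re = Real.sqrt 3 * (b ^ 2 - 1) / (2 * a ^ 2 - b ^ 2 - 1) ∧
    w.im / w.re = Real.sqrt 3 * (x ^ 2 + y ^ 2 - 2 * x) / (x ^ 2 + y ^ 2 + 2 * x - 2) :=
  stmt14_general a b x y hx hy hy2 z w hz hw
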